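/- arXiv:1804.08005 — 5 statements merged into one kernel-verified Lean document; each statement's English description precedes it below -/
import Mathlib

section
/- (Lemma 1(i)) For each player i, the convex hull of C(Γ,i) equals the set of all μ ∈ Δ(A) such that for every a_i in the support of μ_i, the conditional distribution μ_{-i}(·|a_i) lies in the convex hull of C(Γ,i,a_i). -/
/-! The inclusion `⊆` holds because the right-hand side is convex and contains `C(Γ, i)`: the
conditional at `a_i` of a mixture `t μ + s ν` is the convex combination of the conditionals of
`μ` and `ν` with weights proportional to `t μ_i(a_i)` and `s ν_i(a_i)`. For `⊇`, decompose
`μ = ∑_{a_i} μ_i(a_i) · δ_{a_i} ⊗ μ_{-i}(·|a_i)`; the map `π ↦ δ_{a_i} ⊗ π` is linear and sends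
`C(Γ, i, a_i)` into `C(Γ, i)`, hence sends its convex hull into the convex hull of `C(Γ, i)`. -/

open Finset

section

variable {ι : Type*} [Fintype ι] [DecidableEq ι]

/-- Combine an action `ai` of player `i` with an action profile `a` of the remaining
players into a full action profile. -/
def glue (A : ι → Type*) (i : ι) (ai : A i)
    (a : ∀ j : {j : ι // j ≠ i}, A j.1) (j : ι) : A j :=
  if h : j = i then cast (congrArg A h).symm ai else a ⟨j, h⟩

variable (A : ι → Type*) [∀ j, Fintype (A j)] [∀ j, DecidableEq (A j)]

/-- Marginal probability `μ_i(a_i)` of a joint distribution `μ` on action profiles. -/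
noncomputable def marg (μ : (∀ j, A j) → ℝ) (i : ι) (ai : A i) : ℝ :=
  ∑ a : ∀ j : {j : ι // j ≠ i}, A j.1, μ (glue A i ai a)

/-- Conditional distribution `μ_{-i}(·|a_i)` on opponents' action profiles
(by convention `0` when the marginal vanishes, since division by zero yields `0`). -/
noncomputable def condDist (μ : (∀ j, A j) → ℝ) (i : ι) (ai : A i) :
    (∀ j : {j : ι // j ≠ i}, A j.1) → ℝ :=
  fun a => μ (glue A i ai a) / marg A μ i ai

variable (x : ∀ i, (∀ j, A j) → ℝ)
variable (V : ∀ i, ((∀ j : {j : ι // j ≠ i}, A j.1) → ℝ) →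
  ((∀ j : {j : ι // j ≠ i}, A j.1) → ℝ) → ℝ)

/-- The outcome profile of the lottery faced by player `i` when she plays `ai`:
her payoff as a function of the opponents' action profile. -/
def outcome (i : ι) (ai : A i) : (∀ j : {j : ι // j ≠ i}, A j.1) → ℝ :=
  fun a => x i (glue A i ai a)

/-- `C(Γ, i, a_i)` : distributions `π` on opponents' profiles for which `a_i` is a
CPT best response of player `i`, i.e. `V_i(L_i(π, a_i)) ≥ V_i(L_i(π, ã_i))` for all `ã_i`. -/
def CEia (i : ι) (ai : A i) : Set ((∀ j : {j : ι // j ≠ i}, A j.1) → ℝ) :=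
  {π | π ∈ stdSimplex ℝ (∀ j : {j : ι // j ≠ i}, A j.1) ∧
    ∀ bi : A i, V i π (outcome A x i bi) ≤ V i π (outcome A x i ai)}

/-- `C(Γ, i)` : joint distributions all of whose conditionals given a supported action
`a_i` of player `i` lie in `C(Γ, i, a_i)`. -/
noncomputable def CEi (i : ι) : Set ((∀ j, A j) → ℝ) :=
  {μ | μ ∈ stdSimplex ℝ (∀ j, A j) ∧
    ∀ ai : A i, 0 < marg A μ i ai → condDist A μ i ai ∈ CEia A x V i ai}

/-- `C(Γ)` : the set of CPT correlated equilibria of the game. -/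
noncomputable def CE : Set ((∀ j, A j) → ℝ) :=
  {μ | μ ∈ stdSimplex ℝ (∀ j, A j) ∧
    ∀ i, ∀ ai : A i, 0 < marg A μ i ai → ∀ bi : A i,
      V i (condDist A μ i ai) (outcome A x i bi) ≤ V i (condDist A μ i ai) (outcome A x i ai)}

theorem Convex.smul_add_smul_mem_of_ne_zero {𝕜 E : Type*} [Semiring 𝕜] [PartialOrder 𝕜]
    [Nontrivial 𝕜] [AddCommMonoid E] [Module 𝕜 E] {K : Set E} (hK : Convex 𝕜 K) {x y : E}
    {a b : 𝕜} (ha : 0 ≤ a) (hb : 0 ≤ b) (hab : a + b = 1) (hx : a ≠ 0 → x ∈ K)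
    (hy : b ≠ 0 → y ∈ K) : a • x + b • y ∈ K := by
  by_cases ha0 : a = 0
  · obtain rfl : b = 1 := by rwa [ha0, zero_add] at hab
    simpa [ha0] using hy one_ne_zero
  by_cases hb0 : b = 0
  · obtain rfl : a = 1 := by rwa [hb0, add_zero] at hab
    simpa [hb0] using hx one_ne_zero
  exact hK (hx ha0) (hy hb0) ha hb hab

omit [Fintype ι] [∀ j, Fintype (A j)] [∀ j, DecidableEq (A j)] in
theorem glue_eq_piSplitAt_symm (i : ι) (ai : A i) (a : ∀ j : {j : ι // j ≠ i}, A j.1) :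
    glue A i ai a = (Equiv.piSplitAt i A).symm (ai, a) := by
  funext j
  by_cases h : j = i
  · subst h
    simp [glue, Equiv.piSplitAt]
  · simp [glue, Equiv.piSplitAt, h]

omit [Fintype ι] [∀ j, Fintype (A j)] [∀ j, DecidableEq (A j)] in
@[simp]
theorem glue_self (i : ι) (ai : A i) (a : ∀ j : {j : ι // j ≠ i}, A j.1) :
    glue A i ai a i = ai := by
  simp [glue]

omit [Fintype ι] [∀ j, Fintype (A j)] [∀ j, DecidableEq (A j)] in
@[simp]
theorem glue_val (i : ι) (ai : A i) (a : ∀ j : {j : ι // j ≠ i}, A j.1)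
    (j : {j : ι // j ≠ i}) : glue A i ai a j = a j := by
  simp [glue, j.2]

omit [Fintype ι] [∀ j, Fintype (A j)] [∀ j, DecidableEq (A j)] in
theorem glue_apply_self_val (i : ι) (b : ∀ j, A j) : glue A i (b i) (fun j => b j) = b := by
  rw [glue_eq_piSplitAt_symm]
  exact (Equiv.piSplitAt i A).symm_apply_apply b

omit [∀ j, DecidableEq (A j)] in
theorem sum_glue (i : ι) (f : (∀ j, A j) → ℝ) :
    ∑ b, f b = ∑ ai : A i, ∑ a : ∀ j : {j : ι // j ≠ i}, A j.1, f (glue A i ai a) := by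
  simp_rw [glue_eq_piSplitAt_symm, ← Fintype.sum_prod_type']
  exact ((Equiv.piSplitAt i A).symm.sum_comp f).symm

omit [∀ j, DecidableEq (A j)] in
theorem sum_marg (μ : (∀ j, A j) → ℝ) (i : ι) : ∑ ai, marg A μ i ai = ∑ b, μ b :=
  (sum_glue A i μ).symm

omit [∀ j, DecidableEq (A j)] in
theorem marg_nonneg {μ : (∀ j, A j) → ℝ} (hμ : ∀ b, 0 ≤ μ b) (i : ι) (ai : A i) :
    0 ≤ marg A μ i ai :=
  Finset.sum_nonneg fun _ _ => hμ _

omit [∀ j, DecidableEq (A j)] in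
theorem marg_smul_add_smul (t s : ℝ) (μ ν : (∀ j, A j) → ℝ) (i : ι) (ai : A i) :
    marg A (t • μ + s • ν) i ai = t * marg A μ i ai + s * marg A ν i ai := by
  simp [marg, Finset.mul_sum, Finset.sum_add_distrib]

omit [∀ j, DecidableEq (A j)] in
theorem marg_mul_condDist {μ : (∀ j, A j) → ℝ} (hμ : ∀ b, 0 ≤ μ b) (i : ι) (ai : A i)
    (a : ∀ j : {j : ι // j ≠ i}, A j.1) :
    marg A μ i ai * condDist A μ i ai a = μ (glue A i ai a) := by
  rcases (marg_nonneg A hμ i ai).eq_or_lt with h | h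
  · rw [← h, zero_mul, eq_comm]
    exact (Finset.sum_eq_zero_iff_of_nonneg fun a _ => hμ _).1 h.symm a (Finset.mem_univ a)
  · exact mul_div_cancel₀ _ h.ne'

omit [∀ j, DecidableEq (A j)] in
theorem condDist_smul_add_smul {μ ν : (∀ j, A j) → ℝ} (hμ : ∀ b, 0 ≤ μ b)
    (hν : ∀ b, 0 ≤ ν b) (t s : ℝ) (i : ι) (ai : A i) :
    condDist A (t • μ + s • ν) i ai =
      (t * marg A μ i ai / marg A (t • μ + s • ν) i ai) • condDist A μ i ai +
        (s * marg A ν i ai / marg A (t • μ + s • ν) i ai) • condDist A ν i ai := by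
  funext a
  change (t • μ + s • ν) (glue A i ai a) / _ = _
  simp only [Pi.add_apply, Pi.smul_apply, smul_eq_mul]
  rw [← marg_mul_condDist A hμ, ← marg_mul_condDist A hν]
  ring

omit [∀ j, DecidableEq (A j)] in
theorem convex_setOf_condDist_mem (i : ι)
    {K : A i → Set ((∀ j : {j : ι // j ≠ i}, A j.1) → ℝ)} (hK : ∀ ai, Convex ℝ (K ai)) :
    Convex ℝ {μ : (∀ j, A j) → ℝ | μ ∈ stdSimplex ℝ (∀ j, A j) ∧
      ∀ ai : A i, 0 < marg A μ i ai → condDist A μ i ai ∈ K ai} := by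
  rintro μ ⟨hμ, hμK⟩ ν ⟨hν, hνK⟩ t s ht hs hts
  refine ⟨convex_stdSimplex ℝ _ hμ hν ht hs hts, fun ai hai => ?_⟩
  have hm := marg_smul_add_smul A t s μ ν i ai
  have hmμ := marg_nonneg A hμ.1 i ai
  have hmν := marg_nonneg A hν.1 i ai
  rw [condDist_smul_add_smul A hμ.1 hν.1]
  refine (hK ai).smul_add_smul_mem_of_ne_zero (div_nonneg (mul_nonneg ht hmμ) hai.le)
    (div_nonneg (mul_nonneg hs hmν) hai.le) ?_ (fun h => hμK ai (hmμ.lt_of_ne' ?_))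
    (fun h => hνK ai (hmν.lt_of_ne' ?_))
  · rw [← add_div, ← hm, div_self hai.ne']
  all_goals
    rintro h0
    simp [h0] at h

/-- `δ_{a_i} ⊗ π`. -/
def diracProd (i : ι) (ai : A i) :
    ((∀ j : {j : ι // j ≠ i}, A j.1) → ℝ) →ₗ[ℝ] ((∀ j, A j) → ℝ) where
  toFun π b := if b i = ai then π (fun j => b j) else 0
  map_add' π π' := by
    funext b
    split_ifs <;> simp [*]
  map_smul' c π := by
    funext b
    split_ifs <;> simp [*]

omit [Fintype ι] [DecidableEq ι] [∀ j, Fintype (A j)] in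
theorem diracProd_apply (i : ι) (ai : A i) (π : (∀ j : {j : ι // j ≠ i}, A j.1) → ℝ)
    (b : ∀ j, A j) : diracProd A i ai π b = if b i = ai then π (fun j => b j) else 0 :=
  rfl

omit [Fintype ι] [∀ j, Fintype (A j)] in
theorem diracProd_glue (i : ι) (ai bi : A i) (π : (∀ j : {j : ι // j ≠ i}, A j.1) → ℝ)
    (a : ∀ j : {j : ι // j ≠ i}, A j.1) :
    diracProd A i ai π (glue A i bi a) = if bi = ai then π a else 0 := by
  simp [diracProd_apply]

theorem marg_diracProd (i : ι) (ai bi : A i) (π : (∀ j : {j : ι // j ≠ i}, A j.1) → ℝ) :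
    marg A (diracProd A i ai π) i bi = if bi = ai then ∑ a, π a else 0 := by
  simp only [marg, diracProd_glue]
  split_ifs <;> simp

theorem condDist_diracProd_self (i : ι) (ai : A i) {π : (∀ j : {j : ι // j ≠ i}, A j.1) → ℝ}
    (hπ : ∑ a, π a = 1) : condDist A (diracProd A i ai π) i ai = π := by
  funext a
  simp [condDist, diracProd_glue, marg_diracProd, hπ]

theorem diracProd_mem_stdSimplex (i : ι) (ai : A i) {π : (∀ j : {j : ι // j ≠ i}, A j.1) → ℝ}
    (hπ : π ∈ stdSimplex ℝ (∀ j : {j : ι // j ≠ i}, A j.1)) :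
    diracProd A i ai π ∈ stdSimplex ℝ (∀ j, A j) := by
  refine ⟨fun b => ?_, ?_⟩
  · rw [diracProd_apply]
    split_ifs
    exacts [hπ.1 _, le_rfl]
  · rw [← sum_marg A _ i]
    simp [marg_diracProd, hπ.2]

theorem diracProd_mem_CEi (i : ι) (ai : A i) {π : (∀ j : {j : ι // j ≠ i}, A j.1) → ℝ}
    (hπ : π ∈ CEia A x V i ai) : diracProd A i ai π ∈ CEi A x V i := by
  refine ⟨diracProd_mem_stdSimplex A i ai hπ.1, fun bi hbi => ?_⟩
  obtain rfl : bi = ai := by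
    by_contra h
    simp [marg_diracProd, h] at hbi
  rwa [condDist_diracProd_self A i bi hπ.1.2]

theorem diracProd_mem_convexHull_CEi (i : ι) (ai : A i)
    {π : (∀ j : {j : ι // j ≠ i}, A j.1) → ℝ} (hπ : π ∈ convexHull ℝ (CEia A x V i ai)) :
    diracProd A i ai π ∈ convexHull ℝ (CEi A x V i) := by
  have h := Set.mem_image_of_mem (diracProd A i ai) hπ
  rw [LinearMap.image_convexHull] at h
  exact convexHull_mono (Set.image_subset_iff.2 fun _ => diracProd_mem_CEi A x V i ai) h

theorem sum_marg_smul_diracProd_condDist {μ : (∀ j, A j) → ℝ} (hμ : ∀ b, 0 ≤ μ b) (i : ι) :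
    ∑ ai, marg A μ i ai • diracProd A i ai (condDist A μ i ai) = μ := by
  funext b
  simp only [Finset.sum_apply, Pi.smul_apply, smul_eq_mul, diracProd_apply, mul_ite, mul_zero,
    Finset.sum_ite_eq, Finset.mem_univ, if_true]
  rw [marg_mul_condDist A hμ, glue_apply_self_val]

theorem convexHull_CEi_eq :
    ∀ i : ι, convexHull ℝ (CEi A x V i) =
      {μ : (∀ j, A j) → ℝ | μ ∈ stdSimplex ℝ (∀ j, A j) ∧
        ∀ ai : A i, 0 < marg A μ i ai →
          condDist A μ i ai ∈ convexHull ℝ (CEia A x V i ai)} := by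
  intro i
  refine (convexHull_min ?_ <|
    convex_setOf_condDist_mem A i fun _ => convex_convexHull ℝ _).antisymm ?_
  · rintro μ ⟨hμ, hcond⟩
    exact ⟨hμ, fun ai hai => subset_convexHull ℝ _ (hcond ai hai)⟩
  · rintro μ ⟨hμ, hcond⟩
    have hmarg := marg_nonneg A hμ.1 i
    rw [← sum_marg_smul_diracProd_condDist A hμ.1 i, ← finsum_eq_sum_of_fintype]
    refine (convex_convexHull ℝ _).finsum_mem hmarg ?_ fun ai hai =>
      diracProd_mem_convexHull_CEi A x V i ai (hcond ai ((hmarg ai).lt_of_ne' hai))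
    rw [finsum_eq_sum_of_fintype, sum_marg, hμ.2]

end
end

section
/- Every CPT correlated equilibrium is a mediated CPT correlated equilibrium: if ψ ∈ C(Γ), then taking signal sets B_i = A_i and the obedient pure strategies σ_i(b_i) = point mass at b_i, σ is a mediated CPT Nash equilibrium with mediator distribution ψ, and η(ψ,σ) = ψ. Hence C(Γ) ⊂ D(Γ). -/
open Finset

section

variable {ι : Type*} [Fintype ι] [DecidableEq ι]

variable (A : ι → Type*) [∀ j, Fintype (A j)] [∀ j, DecidableEq (A j)]

variable (x : ∀ i, (∀ j, A j) → ℝ)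
variable (V : ∀ i, ((∀ j : {j : ι // j ≠ i}, A j.1) → ℝ) →
  ((∀ j : {j : ι // j ≠ i}, A j.1) → ℝ) → ℝ)

variable (B : ι → Type*) [∀ j, Fintype (B j)] [∀ j, DecidableEq (B j)]

/-- The assessment `μ̃_{-i}(·|b_i)` of player `i` upon receiving signal `b_i`:
`μ̃_{-i}(a_{-i}|b_i) = Σ_{b_{-i}} ψ_{-i}(b_{-i}|b_i) Π_{j ≠ i} σ_j(b_j)(a_j)`. -/
noncomputable def assess (ψ : (∀ j, B j) → ℝ) (σ : ∀ i, B i → A i → ℝ)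
    (i : ι) (bi : B i) : (∀ j : {j : ι // j ≠ i}, A j.1) → ℝ :=
  fun a => ∑ bm : ∀ j : {j : ι // j ≠ i}, B j.1,
    condDist B ψ i bi bm * ∏ j : {j : ι // j ≠ i}, σ j.1 (bm j) (a j)

/-- `η(ψ, σ)` : the joint distribution on action profiles induced by the mediator
distribution `ψ` and the randomized strategy profile `σ`. -/
noncomputable def eta (ψ : (∀ j, B j) → ℝ) (σ : ∀ i, B i → A i → ℝ) :
    (∀ j, A j) → ℝ :=
  fun a => ∑ b : ∀ j, B j, ψ b * ∏ i, σ i (b i) (a i)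

/-- `σ` is a mediated CPT Nash equilibrium with respect to the mediator distribution `ψ`:
for every player `i` and every signal `b_i` (received with positive probability), the
support of `σ_i(b_i)` consists of CPT best responses to the assessment `μ̃_{-i}(·|b_i)`. -/
noncomputable def MediatedNash (ψ : (∀ j, B j) → ℝ) (σ : ∀ i, B i → A i → ℝ) : Prop :=
  ∀ (i : ι) (bi : B i), 0 < marg B ψ i bi → ∀ ai : A i, 0 < σ i bi ai →
    assess A B ψ σ i bi ∈ CEia A x V i ai

lemma prodEq {κ : Type*} [Fintype κ] (C : κ → Type*) [∀ k, DecidableEq (C k)]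
    (f g : ∀ k, C k) : (∏ k, (if f k = g k then (1:ℝ) else 0)) = if f = g then 1 else 0 := by
  by_cases h : f = g
  · simp [h]
  · rw [if_neg h]
    obtain ⟨k, hk⟩ := Function.ne_iff.mp h
    exact Finset.prod_eq_zero (Finset.mem_univ k) (by simp [hk])

lemma sumEq {κ : Type*} [Fintype κ] [DecidableEq κ] (c : κ → ℝ) (a : κ) :
    (∑ b, c b * (if b = a then (1:ℝ) else 0)) = c a := by
  simp [mul_ite, mul_one, mul_zero]

/-- every CPT correlated equilibrium is a mediated CPT correlated
equilibrium: if `ψ ∈ C(Γ)`, then with signal sets `B_i = A_i` and the obedient pure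
strategies `σ_i(b_i) = δ_{b_i}`, the profile `σ` is a mediated CPT Nash equilibrium
with mediator distribution `ψ` and `η(ψ, σ) = ψ`; hence `C(Γ) ⊆ D(Γ)`. -/
theorem CE_subset_mediated
    (ψ : (∀ j, A j) → ℝ) (hψ : ψ ∈ CE A x V) :
    MediatedNash A x V A ψ (fun _ bi ai => if bi = ai then (1 : ℝ) else 0) ∧
    eta A A ψ (fun _ bi ai => if bi = ai then (1 : ℝ) else 0) = ψ := by
  have hassess : ∀ (i : ι) (bi : A i),
      assess A A ψ (fun _ bi ai => if bi = ai then (1 : ℝ) else 0) i bi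
        = condDist A ψ i bi := by
    intro i bi
    funext a
    unfold assess
    have : ∀ bm : ∀ j : {j : ι // j ≠ i}, A j.1,
        (∏ j : {j : ι // j ≠ i}, (if bm j = a j then (1:ℝ) else 0))
          = if bm = a then 1 else 0 := fun bm => prodEq (fun j : {j : ι // j ≠ i} => A j.1) bm a
    simp_rw [this]
    exact sumEq _ a
  constructor
  · intro i bi hmarg ai hpos
    have hbi : bi = ai := by
      by_contra h
      simp [h] at hpos
    subst hbi
    rw [hassess]
    refine ⟨⟨fun a => div_nonneg (hψ.1.1 _) (le_of_lt hmarg), ?_⟩, hψ.2 i bi hmarg⟩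
    · unfold condDist
      rw [← Finset.sum_div]
      exact div_self (ne_of_gt hmarg)
  · funext a
    unfold eta
    have : ∀ b : ∀ j, A j, (∏ i, (if b i = a i then (1:ℝ) else 0))
        = if b = a then 1 else 0 := fun b => prodEq A b a
    simp_rw [this]
    exact sumEq _ a

end
end

section
/- With B_i = A_i for all players and the obedient strategy σ_i(b_i)(a_i) = 1{b_i = a_i}, the induced conditional assessment satisfies μ̃_{-i}(a_{-i}|b_i) = ψ_{-i}(a_{-i}|b_i), and σ is a mediated CPT Nash equilibrium with respect to mediator distribution ψ if and only if ψ is a CPT correlated equilibrium of Γ. -/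
open Finset

section

variable {ι : Type*} [Fintype ι] [DecidableEq ι]

variable (A : ι → Type*) [∀ j, Fintype (A j)] [∀ j, DecidableEq (A j)]

variable (x : ∀ i, (∀ j, A j) → ℝ)
variable (V : ∀ i, ((∀ j : {j : ι // j ≠ i}, A j.1) → ℝ) →
  ((∀ j : {j : ι // j ≠ i}, A j.1) → ℝ) → ℝ)

variable (B : ι → Type*) [∀ j, Fintype (B j)] [∀ j, DecidableEq (B j)]

/-- with `B_i = A_i` and the obedient strategies
`σ_i(b_i)(a_i) = 1{b_i = a_i}`, the induced assessment satisfies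
`μ̃_{-i}(·|b_i) = ψ_{-i}(·|b_i)`, and `σ` is a mediated CPT Nash equilibrium with
respect to the mediator distribution `ψ` if and only if `ψ` is a CPT correlated
equilibrium of `Γ`. -/
theorem obedient_nash_iff_CE
    (ψ : (∀ j, A j) → ℝ) (hψ : ψ ∈ stdSimplex ℝ (∀ j, A j)) :
    (∀ (i : ι) (bi : A i), 0 < marg A ψ i bi →
      assess A A ψ (fun _ b a => if b = a then (1 : ℝ) else 0) i bi
        = condDist A ψ i bi) ∧
    (MediatedNash A x V A ψ (fun _ b a => if b = a then (1 : ℝ) else 0) ↔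
      ψ ∈ CE A x V) := by
  have hassess : ∀ (i : ι) (bi : A i),
      assess A A ψ (fun _ b a => if b = a then (1 : ℝ) else 0) i bi
        = condDist A ψ i bi := by
    intro i bi
    funext a
    unfold assess
    have hprod : ∀ bm : ∀ j : {j : ι // j ≠ i}, A j.1,
        (∏ j : {j : ι // j ≠ i}, if bm j = a j then (1 : ℝ) else 0)
          = if bm = a then (1 : ℝ) else 0 := by
      intro bm
      by_cases h : bm = a
      · subst h; simp
      · rw [if_neg h]
        obtain ⟨j, hj⟩ := Function.ne_iff.mp h
        exact Finset.prod_eq_zero (Finset.mem_univ j) (if_neg hj)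
    simp only [hprod, mul_ite, mul_one, mul_zero, Finset.sum_ite_eq', Finset.mem_univ,
      if_true]
  have hsimplex : ∀ (i : ι) (bi : A i), 0 < marg A ψ i bi →
      condDist A ψ i bi ∈ stdSimplex ℝ (∀ j : {j : ι // j ≠ i}, A j.1) := by
    intro i bi hpos
    constructor
    · intro a
      exact div_nonneg (hψ.1 _) hpos.le
    · simp only [condDist]
      rw [← Finset.sum_div, marg]
      exact div_self hpos.ne'
  refine ⟨fun i bi _ => hassess i bi, ?_, ?_⟩
  · intro hmn
    refine ⟨hψ, fun i ai hpos bi => ?_⟩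
    have := hmn i ai hpos ai (by simp)
    rw [hassess] at this
    exact this.2 bi
  · intro hce i bi hpos ai hσ
    have hbi : bi = ai := by
      by_contra h
      simp [h] at hσ
    subst hbi
    rw [hassess]
    exact ⟨hsimplex i bi hpos, fun b => hce.2 i bi hpos b⟩

end
end

section
/- (Key computation in the proof of Theorem 1) Suppose a forecaster's predictions μ^τ ∈ Δ(S) are calibrated with respect to Nature's plays y^τ ∈ S, i.e., Σ_{q∈Q^t} |ρ(q,y,t) − q(y)| N(q,t)/t → 0 for all y ∈ S. Let R ⊂ Δ(S) be any subset of possible forecasts. If along a subsequence t_k the total fraction of times forecasts lie in R converges to a positive limit, then the empirical distribution of Nature's plays over the times τ ≤ t_k with μ^τ ∈ R, converges (along a further subsequence) to a point in the closed convex hull of R. -/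
open Finset
open scoped Classical

/-- `Ncount pred q t` : number of steps `τ < t` at which the forecast `pred τ` equals `q`. -/
noncomputable def Ncount {S : Type*} (pred : ℕ → (S → ℝ)) (q : S → ℝ) (t : ℕ) : ℕ :=
  ((Finset.range t).filter (fun τ => pred τ = q)).card

/-- `rho pred y q s t` : the fraction of the steps `τ < t` with forecast `q` on which
Nature played `s` (zero if `q` was never forecast). -/
noncomputable def rho {S : Type*} (pred : ℕ → (S → ℝ)) (y : ℕ → S) (q : S → ℝ)
    (s : S) (t : ℕ) : ℝ :=
  if Ncount pred q t = 0 then 0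
  else (((Finset.range t).filter (fun τ => pred τ = q ∧ y τ = s)).card : ℝ) /
    (Ncount pred q t : ℝ)

/-! Group the times `τ < t` whose forecast lies in `R` by the forecast `q` used. On each group
the frequency of `s` is `ρ(q, s, t)`, so the empirical frequency of `s` over all these times differs
from the average `v t` of the forecasts used there, evaluated at `s`, by at most
`Σ_q |ρ(q, s, t) - q s| N(q, t)` divided by their number; that is `t / #(times in R)` times the
calibration error, which tends to `c⁻¹ · 0` along `t_k`. The averages `v t` lie in the convex hull
of `R`, inside the compact simplex, so a subsequence of them converges, and the empirical
distributions converge to the same limit. -/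

open Filter Topology

theorem IsCompact.exists_strictMono_tendsto_of_tendsto_sub {X : Type*} [TopologicalSpace X]
    [AddGroup X] [IsTopologicalAddGroup X] [FirstCountableTopology X] {K : Set X}
    (hK : IsCompact K) {u v : ℕ → X} (hv : ∀ᶠ n in atTop, v n ∈ K)
    (huv : Tendsto (fun n => u n - v n) atTop (𝓝 0)) :
    ∃ φ : ℕ → ℕ, StrictMono φ ∧ ∃ L ∈ K, Tendsto (u ∘ φ) atTop (𝓝 L) := by
  obtain ⟨n₀, hn₀⟩ := eventually_atTop.1 hv
  obtain ⟨L, hL, ψ, hψ, hvψ⟩ :=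
    hK.tendsto_subseq fun n => hn₀ (n₀ + n) (Nat.le_add_right n₀ n)
  have hφ : StrictMono (fun n => n₀ + ψ n) := fun a b hab => Nat.add_lt_add_left (hψ hab) n₀
  refine ⟨_, hφ, L, hL, ?_⟩
  simpa [Function.comp_def] using (huv.comp hφ.tendsto_atTop).add hvψ

section Forecasts

variable {S : Type*} (pred : ℕ → S → ℝ) (y : ℕ → S)

theorem rho_mul_Ncount (q : S → ℝ) (s : S) (t : ℕ) :
    rho pred y q s t * Ncount pred q t
      = #((range t).filter (fun τ => pred τ = q ∧ y τ = s)) := by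
  unfold rho
  split_ifs with hN
  · have : #((range t).filter (fun τ => pred τ = q ∧ y τ = s)) ≤ Ncount pred q t :=
      card_le_card (monotone_filter_right _ fun _ _ h => h.1)
    simp [Nat.le_zero.1 (hN ▸ this)]
  · exact div_mul_cancel₀ _ (Nat.cast_ne_zero.2 hN)

theorem sum_filter_eq_sub_mul_Ncount (q : S → ℝ) (s : S) (t : ℕ) :
    ∑ τ ∈ (range t).filter (fun τ => pred τ = q), ((if y τ = s then 1 else 0) - pred τ s)
      = (rho pred y q s t - q s) * Ncount pred q t := by
  have hfiber : ∀ τ ∈ (range t).filter (fun τ => pred τ = q), pred τ s = q s :=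
    fun τ hτ => by rw [(mem_filter.1 hτ).2]
  rw [sum_sub_distrib, sum_congr rfl hfiber, sum_boole, filter_filter, sum_const, nsmul_eq_mul,
    sub_mul, rho_mul_Ncount, Ncount, mul_comm]

-- Generic in the instance, to match the `image` of the theorem, where `[Fintype S]` already makes
-- equality on `S → ℝ` decidable.
noncomputable def calibrationError [DecidableEq (S → ℝ)] (s : S) (t : ℕ) : ℝ :=
  ∑ q ∈ (range t).image pred, |rho pred y q s t - q s| * (Ncount pred q t : ℝ) / (t : ℝ)

theorem mul_calibrationError [DecidableEq (S → ℝ)] (s : S) (t : ℕ) :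
    t * calibrationError pred y s t
      = ∑ q ∈ (range t).image pred, |rho pred y q s t - q s| * Ncount pred q t := by
  rcases Nat.eq_zero_or_pos t with rfl | ht
  · simp
  · rw [calibrationError, mul_sum]
    exact sum_congr rfl fun q _ => mul_div_cancel₀ _ (by positivity)

variable (R : Set (S → ℝ))

noncomputable def timesIn (t : ℕ) : Finset ℕ := (range t).filter (fun τ => pred τ ∈ R)

theorem sum_timesIn_eq_sum_image [DecidableEq (S → ℝ)] (s : S) (t : ℕ) :
    ∑ τ ∈ timesIn pred R t, ((if y τ = s then 1 else 0) - pred τ s)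
      = ∑ q ∈ (timesIn pred R t).image pred, (rho pred y q s t - q s) * Ncount pred q t := by
  rw [← sum_fiberwise_of_maps_to fun τ hτ => mem_image_of_mem pred hτ]
  refine sum_congr rfl fun q hq => ?_
  obtain ⟨τ, hτ, rfl⟩ := mem_image.1 hq
  have hR : pred τ ∈ R := (mem_filter.1 hτ).2
  rw [← sum_filter_eq_sub_mul_Ncount]
  refine sum_congr (ext fun σ => ?_) fun _ _ => rfl
  simp only [timesIn, mem_filter]
  exact ⟨fun h => ⟨h.1.1, h.2⟩, fun h => ⟨⟨h.1, h.2 ▸ hR⟩, h.2⟩⟩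

theorem abs_sum_timesIn_le [DecidableEq (S → ℝ)] (s : S) (t : ℕ) :
    |∑ τ ∈ timesIn pred R t, ((if y τ = s then 1 else 0) - pred τ s)|
      ≤ t * calibrationError pred y s t := by
  rw [sum_timesIn_eq_sum_image, mul_calibrationError]
  refine (abs_sum_le_sum_abs _ _).trans ?_
  simp_rw [abs_mul, Nat.abs_cast]
  refine sum_le_sum_of_subset_of_nonneg (fun q hq => ?_) fun _ _ _ => by positivity
  obtain ⟨τ, hτ, rfl⟩ := mem_image.1 hq
  exact mem_image_of_mem pred (mem_filter.1 hτ).1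

noncomputable def meanForecastIn (t : ℕ) : S → ℝ :=
  (timesIn pred R t).centerMass (fun _ => (1 : ℝ)) pred

noncomputable def empiricalIn (t : ℕ) (s : S) : ℝ :=
  (#((range t).filter (fun τ => pred τ ∈ R ∧ y τ = s)) : ℝ) / #(timesIn pred R t)

theorem meanForecastIn_mem_convexHull {t : ℕ} (h : (timesIn pred R t).Nonempty) :
    meanForecastIn pred R t ∈ convexHull ℝ R :=
  centerMass_mem_convexHull (timesIn pred R t) (w := fun _ => (1 : ℝ))
    (fun _ _ => zero_le_one) (by simpa using h) fun _ hτ => (mem_filter.1 hτ).2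

theorem empiricalIn_sub_meanForecastIn (t : ℕ) (s : S) :
    empiricalIn pred y R t s - meanForecastIn pred R t s
      = (∑ τ ∈ timesIn pred R t, ((if y τ = s then 1 else 0) - pred τ s))
        / #(timesIn pred R t) := by
  rw [sum_sub_distrib, sum_boole, timesIn, filter_filter, sub_div, empiricalIn, meanForecastIn,
    Finset.centerMass]
  simp [div_eq_inv_mul, timesIn, Finset.sum_apply]

theorem abs_empiricalIn_sub_meanForecastIn_le [DecidableEq (S → ℝ)] (s : S) (t : ℕ) :
    |empiricalIn pred y R t s - meanForecastIn pred R t s|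
      ≤ t / #(timesIn pred R t) * calibrationError pred y s t := by
  rw [empiricalIn_sub_meanForecastIn, abs_div, Nat.abs_cast, div_mul_eq_mul_div]
  exact div_le_div_of_nonneg_right (abs_sum_timesIn_le pred y R s t) (Nat.cast_nonneg _)

end Forecasts

theorem calibrated_conditional_empirical_to_convex_hull_general
    {S : Type*} [Fintype S]
    (y : ℕ → S) (pred : ℕ → (S → ℝ))
    (hcal : ∀ s : S, Filter.Tendsto
      (fun t => ∑ q ∈ (Finset.range t).image pred,
        |rho pred y q s t - q s| * (Ncount pred q t : ℝ) / (t : ℝ))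
      Filter.atTop (nhds 0))
    (R : Set (S → ℝ)) (hR : R ⊆ stdSimplex ℝ S)
    (tk : ℕ → ℕ) (htk : StrictMono tk) (c : ℝ) (hc : 0 < c)
    (hfrac : Filter.Tendsto (fun k =>
        (((Finset.range (tk k)).filter (fun τ => pred τ ∈ R)).card : ℝ) / (tk k : ℝ))
      Filter.atTop (nhds c)) :
    ∃ φ : ℕ → ℕ, StrictMono φ ∧ ∃ L ∈ closure (convexHull ℝ R),
      Filter.Tendsto (fun k => (fun s : S =>
          (((Finset.range (tk (φ k))).filter (fun τ => pred τ ∈ R ∧ y τ = s)).card : ℝ) /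
            (((Finset.range (tk (φ k))).filter (fun τ => pred τ ∈ R)).card : ℝ)))
        Filter.atTop (nhds L) := by
  have hK : IsCompact (closure (convexHull ℝ R)) :=
    (isCompact_stdSimplex ℝ S).closure_of_subset (convexHull_min hR (convex_stdSimplex ℝ S))
  have hmean : ∀ᶠ k in atTop, meanForecastIn pred R (tk k) ∈ closure (convexHull ℝ R) := by
    refine (hfrac.eventually (eventually_gt_nhds hc)).mono fun k hk => subset_closure ?_
    have hcard : (#(timesIn pred R (tk k)) : ℝ) ≠ 0 := left_ne_zero_of_mul hk.ne'
    exact meanForecastIn_mem_convexHull pred R (card_ne_zero.1 (Nat.cast_ne_zero.1 hcard))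
  have hratio : Tendsto (fun k => (tk k : ℝ) / #(timesIn pred R (tk k))) atTop (𝓝 c⁻¹) :=
    (hfrac.inv₀ hc.ne').congr fun k => inv_div _ _
  have hgap : Tendsto (fun k => empiricalIn pred y R (tk k) - meanForecastIn pred R (tk k))
      atTop (𝓝 0) := by
    refine tendsto_pi_nhds.2 fun s => squeeze_zero_norm
      (fun k => abs_empiricalIn_sub_meanForecastIn_le pred y R s (tk k)) ?_
    have hcalk : Tendsto (fun k => calibrationError pred y s (tk k)) atTop (𝓝 0) :=
      (hcal s).comp htk.tendsto_atTop
    simpa only [mul_zero] using hratio.mul hcalk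
  exact hK.exists_strictMono_tendsto_of_tendsto_sub hmean hgap

/-- if the forecasts `pred` are calibrated with respect to Nature's plays `y`,
`R ⊆ Δ(S)` is a set of forecasts, and along a subsequence `tk` the fraction of times the
forecast lies in `R` converges to a positive limit `c`, then along a further subsequence the
empirical distribution of Nature's plays over the times with forecast in `R` converges to a
point in the closed convex hull of `R`. -/
theorem calibrated_conditional_empirical_to_convex_hull
    {S : Type*} [Fintype S]
    (y : ℕ → S) (pred : ℕ → (S → ℝ)) (hpred : ∀ τ, pred τ ∈ stdSimplex ℝ S)
    (hcal : ∀ s : S, Filter.Tendsto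
      (fun t => ∑ q ∈ (Finset.range t).image pred,
        |rho pred y q s t - q s| * (Ncount pred q t : ℝ) / (t : ℝ))
      Filter.atTop (nhds 0))
    (R : Set (S → ℝ)) (hR : R ⊆ stdSimplex ℝ S)
    (tk : ℕ → ℕ) (htk : StrictMono tk) (c : ℝ) (hc : 0 < c)
    (hfrac : Filter.Tendsto (fun k =>
        (((Finset.range (tk k)).filter (fun τ => pred τ ∈ R)).card : ℝ) / (tk k : ℝ))
      Filter.atTop (nhds c)) :
    ∃ φ : ℕ → ℕ, StrictMono φ ∧ ∃ L ∈ closure (convexHull ℝ R),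
      Filter.Tendsto (fun k => (fun s : S =>
          (((Finset.range (tk (φ k))).filter (fun τ => pred τ ∈ R ∧ y τ = s)).card : ℝ) /
            (((Finset.range (tk (φ k))).filter (fun τ => pred τ ∈ R)).card : ℝ)))
        Filter.atTop (nhds L) :=
  calibrated_conditional_empirical_to_convex_hull_general y pred hcal R hR tk htk c hc hfrac
end

section
/- (Shift characterization in Proposition 2's proof) Fix a continuous function F : Δ(A_{-i}) → ℝ and for δ ∈ ℝ define C^δ = {μ ∈ Δ(A_{-i}) : F(μ) ≤ δ}. Then μ is an isolated point of C^δ if and only if δ = F(μ) and μ is a strict local minimum of F. Consequently, the set of δ ∈ ℝ for which C^δ has at least one isolated point is countable (hence Lebesgue-null). -/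
/-- for a continuous `F` on the simplex `Δ(S)` (with `Δ(S)` having no
isolated points, guaranteed by `1 < card S`) and `C^δ = {μ ∈ Δ(S) | F μ ≤ δ}`:
`μ` is an isolated point of `C^δ` iff `δ = F μ` and `μ` is a strict local minimum of `F`;
consequently the set of `δ` for which `C^δ` has at least one isolated point is countable
(hence Lebesgue-null). -/
theorem isolated_point_iff_strict_local_min_and_countable
    {S : Type*} [Fintype S] (hS : 1 < Fintype.card S)
    (F : (S → ℝ) → ℝ) (hF : ContinuousOn F (stdSimplex ℝ S)) :
    (∀ δ : ℝ, ∀ μ ∈ stdSimplex ℝ S,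
      ((F μ ≤ δ ∧ ∃ U : Set (S → ℝ), IsOpen U ∧ μ ∈ U ∧
          U ∩ {ν ∈ stdSimplex ℝ S | F ν ≤ δ} = {μ}) ↔
        (F μ = δ ∧ ∃ U : Set (S → ℝ), IsOpen U ∧ μ ∈ U ∧
          ∀ ν ∈ stdSimplex ℝ S, ν ∈ U → ν ≠ μ → F μ < F ν))) ∧
    Set.Countable {δ : ℝ | ∃ μ ∈ stdSimplex ℝ S,
      F μ ≤ δ ∧ ∃ U : Set (S → ℝ), IsOpen U ∧ μ ∈ U ∧
        U ∩ {ν ∈ stdSimplex ℝ S | F ν ≤ δ} = {μ}} := by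
  classical
  -- The simplex has no isolated points
  have hniso : ∀ μ ∈ stdSimplex ℝ S, ∀ U : Set (S → ℝ), IsOpen U → μ ∈ U →
      ∃ ν ∈ stdSimplex ℝ S, ν ∈ U ∧ ν ≠ μ := by
    intro μ hμ U hU hμU
    obtain ⟨s, t, hst⟩ := Fintype.exists_pair_of_one_lt_card hS
    have hvert : ∃ ν0 ∈ stdSimplex ℝ S, ν0 ≠ μ := by
      by_cases h : (Pi.single s 1 : S → ℝ) = μ
      · refine ⟨Pi.single t 1, single_mem_stdSimplex ℝ t, ?_⟩
        rw [← h]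
        intro he
        have := congrFun he t
        simp [Pi.single_apply, hst.symm] at this
      · exact ⟨Pi.single s 1, single_mem_stdSimplex ℝ s, h⟩
    obtain ⟨ν0, hν0, hν0μ⟩ := hvert
    have hcont : Filter.Tendsto (fun ε : ℝ => (1 - ε) • μ + ε • ν0)
        (nhdsWithin 0 (Set.Ioo (0:ℝ) 1)) (nhds μ) := by
      have : Filter.Tendsto (fun ε : ℝ => (1 - ε) • μ + ε • ν0) (nhds 0) (nhds μ) := by
        have h1 : Continuous (fun ε : ℝ => (1 - ε) • μ + ε • ν0) := by continuity
        have h2 : (1 - (0:ℝ)) • μ + (0:ℝ) • ν0 = μ := by simp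
        simpa [h2] using h1.tendsto 0
      exact this.mono_left nhdsWithin_le_nhds
    have hne : (nhdsWithin (0:ℝ) (Set.Ioo (0:ℝ) 1)).NeBot := by
      apply mem_closure_iff_nhdsWithin_neBot.mp
      rw [closure_Ioo one_ne_zero.symm]
      exact ⟨le_refl 0, zero_le_one⟩
    have hev : ∀ᶠ ε in nhdsWithin (0:ℝ) (Set.Ioo (0:ℝ) 1),
        ((1 - ε) • μ + ε • ν0) ∈ U ∧ ε ∈ Set.Ioo (0:ℝ) 1 :=
      (hcont.eventually (hU.mem_nhds hμU)).and self_mem_nhdsWithin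
    obtain ⟨ε, hεU, hε⟩ := hev.exists
    refine ⟨(1 - ε) • μ + ε • ν0, ?_, hεU, ?_⟩
    · exact convex_stdSimplex ℝ S hμ hν0 (by linarith [hε.2]) (le_of_lt hε.1) (by ring)
    · intro he
      apply hν0μ
      have : ε • ν0 = ε • μ := by
        have h' : (1 - ε) • μ = μ - ε • μ := by rw [sub_smul, one_smul]
        rw [h'] at he
        have := congrArg (· - (μ - ε • μ)) he
        simpa [sub_sub_cancel] using this
      exact smul_right_injective _ (ne_of_gt hε.1) this
  have main : ∀ δ : ℝ, ∀ μ ∈ stdSimplex ℝ S,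
      ((F μ ≤ δ ∧ ∃ U : Set (S → ℝ), IsOpen U ∧ μ ∈ U ∧
          U ∩ {ν ∈ stdSimplex ℝ S | F ν ≤ δ} = {μ}) ↔
        (F μ = δ ∧ ∃ U : Set (S → ℝ), IsOpen U ∧ μ ∈ U ∧
          ∀ ν ∈ stdSimplex ℝ S, ν ∈ U → ν ≠ μ → F μ < F ν)) := by
    intro δ μ hμ
    constructor
    · rintro ⟨hle, U, hU, hμU, hUeq⟩
      have hmin : ∀ ν ∈ stdSimplex ℝ S, ν ∈ U → ν ≠ μ → δ < F ν := by
        intro ν hνs hνU hνμ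
        by_contra h
        push_neg at h
        have : ν ∈ U ∩ {ν ∈ stdSimplex ℝ S | F ν ≤ δ} := ⟨hνU, hνs, h⟩
        rw [hUeq] at this
        exact hνμ this
      refine ⟨?_, U, hU, hμU, fun ν hνs hνU hνμ => lt_of_le_of_lt hle (hmin ν hνs hνU hνμ)⟩
      by_contra hne
      have hlt : F μ < δ := lt_of_le_of_ne hle hne
      have hmem : F ⁻¹' Set.Iio δ ∈ nhdsWithin μ (stdSimplex ℝ S) :=
        hF μ hμ (Iio_mem_nhds hlt)
      obtain ⟨V, hVo, hμV, hV⟩ := mem_nhdsWithin.mp hmem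
      obtain ⟨ν, hνs, hνUV, hνμ⟩ := hniso μ hμ (U ∩ V) (hU.inter hVo) ⟨hμU, hμV⟩
      have : F ν < δ := hV ⟨hνUV.2, hνs⟩
      exact absurd (le_of_lt this) (not_le.mpr (hmin ν hνs hνUV.1 hνμ))
    · rintro ⟨heq, U, hU, hμU, hmin⟩
      refine ⟨le_of_eq heq, U, hU, hμU, ?_⟩
      ext ν
      constructor
      · rintro ⟨hνU, hνs, hνF⟩
        by_contra hνμ
        have := hmin ν hνs hνU hνμ
        rw [heq] at this
        exact absurd hνF (not_le.mpr this)
      · rintro rfl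
        exact ⟨hμU, hμ, le_of_eq heq⟩
  refine ⟨main, ?_⟩
  obtain ⟨b, hbc, -, hbb⟩ := TopologicalSpace.exists_countable_basis (S → ℝ)
  have hsub : {δ : ℝ | ∃ μ ∈ stdSimplex ℝ S,
      F μ ≤ δ ∧ ∃ U : Set (S → ℝ), IsOpen U ∧ μ ∈ U ∧
        U ∩ {ν ∈ stdSimplex ℝ S | F ν ≤ δ} = {μ}} ⊆
      ⋃ B ∈ b, {δ : ℝ | ∃ μ ∈ stdSimplex ℝ S, μ ∈ B ∧ F μ = δ ∧
        ∀ ν ∈ stdSimplex ℝ S, ν ∈ B → ν ≠ μ → F μ < F ν} := by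
    rintro δ ⟨μ, hμ, hprop⟩
    obtain ⟨heq, U, hU, hμU, hmin⟩ := (main δ μ hμ).mp hprop
    obtain ⟨B, hBb, hμB, hBU⟩ := hbb.exists_subset_of_mem_open hμU hU
    exact Set.mem_biUnion hBb ⟨μ, hμ, hμB, heq,
      fun ν hνs hνB hνμ => hmin ν hνs (hBU hνB) hνμ⟩
  refine Set.Countable.mono hsub (Set.Countable.biUnion hbc fun B _ => ?_)
  apply Set.Subsingleton.countable
  rintro δ1 ⟨μ1, hμ1, hμ1B, hδ1, hmin1⟩ δ2 ⟨μ2, hμ2, hμ2B, hδ2, hmin2⟩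
  have : μ1 = μ2 := by
    by_contra hne
    have h1 := hmin1 μ2 hμ2 hμ2B (Ne.symm hne)
    have h2 := hmin2 μ1 hμ1 hμ1B hne
    linarith
  rw [← hδ1, ← hδ2, this]
end
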